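/- Let L₁ be a smooth compact n-manifold and x ∈ L₁. Suppose g₁, …, g_d : L₁ → ℝ are smooth functions such that the differentials dg₁(x), …, dg_d(x) span the cotangent space T_x*L₁. Then the map Ψ : ℝ^d × L₁ → T*L₁, (s, x) ↦ (x, Σᵢ sᵢ·dgᵢ(x)), is a submersion at every point (s, x) with x in the region where the spanning condition holds. -/

import Mathlib

open Function Set in
/-- The submersion claim of the Lagrangian tomograph lemma, in a chart: if the differentials
`dg₁(x₀), …, d g_d(x₀)` span the cotangent space at `x₀`, then the map
`Ψ : (s, x) ↦ (x, ∑ i, sᵢ · dgᵢ(x))` into the cotangent bundle is a submersion at every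
point `(s, x₀)`. -/
theorem stmt_16 {E : Type*} [NormedAddCommGroup E] [NormedSpace ℝ E] [FiniteDimensional ℝ E]
    (d : ℕ) (g : Fin d → E → ℝ) (hg : ∀ i, ContDiff ℝ (⊤ : ℕ∞) (g i))
    (Ψ : ((Fin d → ℝ) × E) → E × (E →L[ℝ] ℝ))
    (hΨ : ∀ s x, Ψ (s, x) = (x, ∑ i, s i • fderiv ℝ (g i) x))
    (x₀ : E)
    (hspan : Submodule.span ℝ (Set.range fun i => fderiv ℝ (g i) x₀) = ⊤) :
    ∀ s : Fin d → ℝ, Surjective (fderiv ℝ Ψ (s, x₀)) := by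
  intro s
  set A : Fin d → (E →L[ℝ] ℝ) := fun i => fderiv ℝ (g i) x₀ with hA
  set B : Fin d → (E →L[ℝ] (E →L[ℝ] ℝ)) := fun i => fderiv ℝ (fun x => fderiv ℝ (g i) x) x₀ with hB
  have hΨeq : Ψ = fun p : (Fin d → ℝ) × E => (p.2, ∑ i, p.1 i • fderiv ℝ (g i) p.2) := by
    funext p; cases p; exact hΨ _ _
  have hdf : ∀ i, Differentiable ℝ (fun x => fderiv ℝ (g i) x) := fun i =>
    ((hg i).fderiv_right (m := (⊤ : ℕ∞)) (by simp)).differentiable (by simp)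
  have hterm : ∀ i : Fin d, HasFDerivAt (fun p : (Fin d → ℝ) × E => p.1 i • fderiv ℝ (g i) p.2)
      (s i • ((B i).comp (ContinuousLinearMap.snd ℝ (Fin d → ℝ) E)) +
        (((ContinuousLinearMap.proj i : (Fin d → ℝ) →L[ℝ] ℝ).comp
          (ContinuousLinearMap.fst ℝ (Fin d → ℝ) E)).smulRight (A i))) (s, x₀) := by
    intro i
    have hc : HasFDerivAt (fun p : (Fin d → ℝ) × E => p.1 i)
        ((ContinuousLinearMap.proj i : (Fin d → ℝ) →L[ℝ] ℝ).comp
          (ContinuousLinearMap.fst ℝ (Fin d → ℝ) E)) (s, x₀) :=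
      (((ContinuousLinearMap.proj i : (Fin d → ℝ) →L[ℝ] ℝ).comp
          (ContinuousLinearMap.fst ℝ (Fin d → ℝ) E))).hasFDerivAt
    have hf : HasFDerivAt (fun p : (Fin d → ℝ) × E => fderiv ℝ (g i) p.2)
        ((B i).comp (ContinuousLinearMap.snd ℝ (Fin d → ℝ) E)) (s, x₀) :=
      ((hdf i x₀).hasFDerivAt).comp (s, x₀) hasFDerivAt_snd
    exact hc.smul hf
  have hsum : HasFDerivAt (fun p : (Fin d → ℝ) × E => ∑ i, p.1 i • fderiv ℝ (g i) p.2)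
      (∑ i, (s i • ((B i).comp (ContinuousLinearMap.snd ℝ (Fin d → ℝ) E)) +
        (((ContinuousLinearMap.proj i : (Fin d → ℝ) →L[ℝ] ℝ).comp
          (ContinuousLinearMap.fst ℝ (Fin d → ℝ) E)).smulRight (A i)))) (s, x₀) :=
    HasFDerivAt.fun_sum (fun i _ => hterm i)
  have hΨD : HasFDerivAt Ψ
      ((ContinuousLinearMap.snd ℝ (Fin d → ℝ) E).prod
        (∑ i, (s i • ((B i).comp (ContinuousLinearMap.snd ℝ (Fin d → ℝ) E)) +
          (((ContinuousLinearMap.proj i : (Fin d → ℝ) →L[ℝ] ℝ).comp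
            (ContinuousLinearMap.fst ℝ (Fin d → ℝ) E)).smulRight (A i))))) (s, x₀) := by
    rw [hΨeq]
    exact hasFDerivAt_snd.prodMk hsum
  rw [hΨD.fderiv]
  rintro ⟨v, φ⟩
  have hmem : (φ - ∑ i, s i • (B i v)) ∈ Submodule.span ℝ (Set.range fun i => fderiv ℝ (g i) x₀) := by
    rw [hspan]; trivial
  obtain ⟨t, ht⟩ := Submodule.mem_span_range_iff_exists_fun ℝ |>.mp hmem
  refine ⟨(t, v), ?_⟩
  simp only [ContinuousLinearMap.prod_apply, ContinuousLinearMap.sum_apply,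
    ContinuousLinearMap.add_apply, ContinuousLinearMap.smul_apply,
    ContinuousLinearMap.comp_apply, ContinuousLinearMap.coe_fst',
    ContinuousLinearMap.coe_snd', ContinuousLinearMap.smulRight_apply,
    ContinuousLinearMap.proj_apply]
  refine Prod.ext rfl ?_
  rw [Finset.sum_add_distrib, ht]
  module
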